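/- Let U be a unitary operator on G and set A = i(1+U) and B = 1−U. Then A B* = B A* and the operator M^{A,B} on G ⊕ G is boundedly invertible (bijective with bounded inverse); in particular the pair (A,B) is normalized. -/

import Mathlib

open ContinuousLinearMap

variable {G : Type*} [NormedAddCommGroup G] [InnerProductSpace ℂ G] [CompleteSpace G]

/-- The operator `M^{A,B}` on `G × G`, `(x₁,x₂) ↦ (A x₁ - B x₂, B x₁ + A x₂)`. -/
noncomputable def MAB (A B : G →L[ℂ] G) : (G × G) →L[ℂ] (G × G) :=
  ((A.comp (fst ℂ G G)) - (B.comp (snd ℂ G G))).prod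
    ((B.comp (fst ℂ G G)) + (A.comp (snd ℂ G G)))

/-- The linear relation `Λ^{A,B} = {(x₁,x₂) : A x₁ = B x₂}`. -/
def LambdaAB (A B : G →L[ℂ] G) : Submodule ℂ (G × G) where
  carrier := {p | A p.1 = B p.2}
  add_mem' := by
    intro a b ha hb
    simp only [Set.mem_setOf_eq] at *
    simp [ha, hb]
  zero_mem' := by simp
  smul_mem' := by
    intro c p hp
    simp only [Set.mem_setOf_eq] at *
    simp [hp]

/-- The adjoint of a linear relation. -/
def relAdjoint (Λ : Submodule ℂ (G × G)) : Submodule ℂ (G × G) where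
  carrier := {p | ∀ q ∈ Λ, (inner ℂ p.1 q.2 : ℂ) = inner ℂ p.2 q.1}
  add_mem' := by
    intro a b ha hb q hq
    simp [inner_add_left, ha q hq, hb q hq]
  zero_mem' := by
    intro q hq; simp
  smul_mem' := by
    intro c p hp q hq
    simp [inner_smul_left, hp q hq]

/-- A linear relation is self-adjoint if it equals its adjoint. -/
def IsSelfAdjointRel (Λ : Submodule ℂ (G × G)) : Prop := relAdjoint Λ = Λ

/-- A bounded operator is boundedly invertible if it has a bounded two-sided inverse. -/
def IsBoundedlyInvertible {E F : Type*} [NormedAddCommGroup E] [NormedSpace ℂ E]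
    [NormedAddCommGroup F] [NormedSpace ℂ F] (T : E →L[ℂ] F) : Prop :=
  ∃ T' : F →L[ℂ] E, (∀ x, T' (T x) = x) ∧ (∀ y, T (T' y) = y)

/-- The pair `(A,B)` is normalized if `A B* = B A*` and `M^{A,B}` is boundedly invertible. -/
noncomputable def IsNormalized (A B : G →L[ℂ] G) : Prop :=
  A ∘L adjoint B = B ∘L adjoint A ∧ IsBoundedlyInvertible (MAB A B)

/-!
`M^{A,B}` acts as multiplication by `A + jB` for a second imaginary unit `j`. When `A` and `B`
commute, multiplying by the conjugate `A - jB` gives `A² + B²`, so `M^{A,B}` is invertible once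
`A² + B²` is; for the Cayley pair `A = i(1+U)`, `B = 1-U` this is `-4U`, a unit.
-/

theorem IsUnit.isBoundedlyInvertible {E : Type*} [NormedAddCommGroup E] [NormedSpace ℂ E]
    {T : E →L[ℂ] E} (hT : IsUnit T) : IsBoundedlyInvertible T := by
  obtain ⟨u, rfl⟩ := hT
  exact ⟨↑u⁻¹, fun x => by rw [← mul_apply_eq_comp, u.inv_mul, one_apply_eq_self],
    fun y => by rw [← mul_apply_eq_comp, u.mul_inv, one_apply_eq_self]⟩

section MAB

variable {H : Type*} [NormedAddCommGroup H] [InnerProductSpace ℂ H]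

theorem MAB_mul_MAB (A B C D : H →L[ℂ] H) :
    MAB C D * MAB A B = MAB (C * A - D * B) (D * A + C * B) := by
  ext x <;> simp [MAB] <;> abel

theorem MAB_one_zero : MAB (1 : H →L[ℂ] H) 0 = 1 := by
  ext x <;> simp [MAB]

theorem isUnit_MAB_zero {S : H →L[ℂ] H} (hS : IsUnit S) : IsUnit (MAB S 0) := by
  obtain ⟨u, rfl⟩ := hS
  exact ⟨⟨MAB u 0, MAB ↑u⁻¹ 0, by simp [MAB_mul_MAB, MAB_one_zero],
    by simp [MAB_mul_MAB, MAB_one_zero]⟩, rfl⟩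

theorem MAB_mul_MAB_neg {A B : H →L[ℂ] H} (hAB : Commute A B) :
    MAB A B * MAB A (-B) = MAB (A * A + B * B) 0 := by
  rw [MAB_mul_MAB, mul_neg, mul_neg, sub_neg_eq_add, hAB.eq, add_neg_cancel]

theorem isUnit_MAB_of_commute {A B : H →L[ℂ] H} (hAB : Commute A B)
    (h : IsUnit (A * A + B * B)) : IsUnit (MAB A B) := by
  have hconj := MAB_mul_MAB_neg hAB
  have hcomm : Commute (MAB A B) (MAB A (-B)) := by
    have hconj' := MAB_mul_MAB_neg hAB.neg_right
    rw [neg_neg, neg_mul_neg] at hconj'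
    exact hconj.trans hconj'.symm
  exact (hcomm.isUnit_mul_iff.mp (hconj ▸ isUnit_MAB_zero h)).1

end MAB

section Cayley

variable {R : Type*} [Ring R] [Algebra ℂ R]

theorem commute_cayley (U : R) : Commute (Complex.I • (1 + U)) (1 - U) :=
  ((Commute.one_right (1 + U)).sub_right ((Commute.one_left U).add_left (Commute.refl U))).smul_left
    Complex.I

theorem cayley_mul_self_add_mul_self (U : R) :
    Complex.I • (1 + U) * Complex.I • (1 + U) + (1 - U) * (1 - U) = (-4 : ℂ) • U := by
  rw [smul_mul_smul, Complex.I_mul_I]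
  simp only [mul_add, add_mul, mul_sub, sub_mul, one_mul, mul_one]
  module

theorem cayley_mul_star [StarRing R] [StarModule ℂ R] {U : R} (hU : U * star U = 1) :
    Complex.I • (1 + U) * star (1 - U) = (1 - U) * star (Complex.I • (1 + U)) := by
  simp only [star_smul, star_add, star_sub, star_one, Complex.star_def, Complex.conj_I,
    mul_smul_comm, smul_mul_assoc, mul_add, mul_sub, add_mul, sub_mul, one_mul, mul_one, hU]
  module

end Cayley

theorem cayley_pair_isNormalized (U : G →L[ℂ] G) (hU : U ∈ unitary (G →L[ℂ] G)) :
    (Complex.I • (1 + U)) ∘L adjoint (1 - U) = (1 - U) ∘L adjoint (Complex.I • (1 + U)) ∧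
      IsBoundedlyInvertible (MAB (Complex.I • (1 + U)) (1 - U)) := by
  refine ⟨?_, IsUnit.isBoundedlyInvertible (isUnit_MAB_of_commute (commute_cayley U) ?_)⟩
  · simpa only [star_eq_adjoint, mul_def] using cayley_mul_star (Unitary.mul_star_self_of_mem hU)
  · rw [cayley_mul_self_add_mul_self, Algebra.smul_def]
    exact ((isUnit_iff_ne_zero.mpr (by norm_num)).map (algebraMap ℂ _)).mul
      (Unitary.isUnit_coe (U := ⟨U, hU⟩))
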